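/- arXiv:2508.04223 — 7 statements merged into one kernel-verified Lean document; each statement's English description precedes it below -/
import Mathlib

section
/- Let N and S be positive integers, let c : Fin N → Fin S → ℝ be a cost matrix, and let m : Fin S → ℕ satisfy ∑_s m s = N. Set p i = 1/N for every i and q s = (m s)/N. Then the discrete Kantorovich cost OT(p, q, c) equals (1/N) times the minimum, over all functions σ : Fin N → Fin S whose fibers satisfy |σ⁻¹({s})| = m s for every s, of ∑_i c i (σ i); in particular the set of such σ is nonempty and the minimum is attained. -/
/-! Splitting each target `s` into `m s` copies of mass `1/N` turns a transport plan, scaled by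
`N`, into a doubly stochastic `N × N` matrix. A linear cost is concave, so by Birkhoff's theorem it
is minimised over such matrices at a permutation matrix, and a permutation of
`Fin N ≃ Σ s, Fin (m s)` is exactly an assignment with fibre sizes `m s`. Conversely, each such
assignment carries the plan of mass `1/N` on its graph, so the bound is attained. -/

/-- Discrete Kantorovich optimal transport cost between probability vectors `p` and `q`
with cost matrix `c`: the infimum of `∑ i, ∑ j, γ i j * c i j` over all transport plans
`γ` with nonnegative entries and the prescribed marginals. -/
noncomputable def discreteOT {α β : Type*} [Fintype α] [Fintype β]
    (p : α → ℝ) (q : β → ℝ) (c : α → β → ℝ) : ℝ :=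
  sInf { v : ℝ | ∃ γ : α → β → ℝ,
    (∀ i j, 0 ≤ γ i j) ∧ (∀ i, ∑ j, γ i j = p i) ∧ (∀ j, ∑ i, γ i j = q j) ∧
    v = ∑ i, ∑ j, γ i j * c i j }

open Finset Matrix

theorem Matrix.exists_perm_sum_le_of_mem_doublyStochastic {R n : Type*} [Field R] [LinearOrder R]
    [IsStrictOrderedRing R] [Fintype n] [DecidableEq n] {D : Matrix n n R}
    (hD : D ∈ doublyStochastic R n) (C : Matrix n n R) :
    ∃ π : Equiv.Perm n, ∑ i, C i (π i) ≤ ∑ i, ∑ j, D i j * C i j := by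
  let cost : Matrix n n R →ₗ[R] R :=
    { toFun := fun A => ∑ i, ∑ j, A i j * C i j
      map_add' := fun A B => by simp only [add_apply, add_mul, sum_add_distrib]
      map_smul' := fun r A => by
        simp only [smul_apply, smul_eq_mul, mul_assoc, mul_sum, RingHom.id_apply] }
  have hD' : D ∈ convexHull R {σ.permMatrix R | σ : Equiv.Perm n} :=
    doublyStochastic_eq_convexHull_permMatrix (R := R) (n := n) ▸ hD
  obtain ⟨_, ⟨π, rfl⟩, hπ⟩ :=
    (cost.concaveOn convex_univ).exists_le_of_mem_convexHull (Set.subset_univ _) hD'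
  refine ⟨π, le_of_eq_of_le ?_ hπ⟩
  simp [cost, Equiv.toPEquiv_apply]

theorem card_filter_sigma_fst_eq {α β : Type*} [Fintype α] [DecidableEq β] {m : β → ℕ}
    (e : α ≃ Σ s, Fin (m s)) (s : β) :
    #{i | (e i).1 = s} = m s := by
  have himage : ({i | (e i).1 = s} : Finset α).map e.toEmbedding =
      ({s} : Finset β).sigma fun _ => univ := by
    ext ⟨t, k⟩
    simp [eq_comm]
  rw [← card_map e.toEmbedding, himage, card_sigma]
  simp

section

variable {α β : Type*} [Fintype α] [Fintype β]

theorem sum_sigma_fin_div_eq_sum {m : β → ℕ} (g : β → ℝ) (hg : ∀ s, m s = 0 → g s = 0) :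
    ∑ x : Σ s, Fin (m s), g x.1 / m x.1 = ∑ s, g s := by
  rw [Fintype.sum_sigma]
  refine sum_congr rfl fun s _ => ?_
  rcases eq_or_ne (m s) 0 with h | h
  · simp [h, hg s h]
  · simp only [sum_const, card_univ, Fintype.card_fin, nsmul_eq_mul]
    field_simp

def IsTransportPlan (p : α → ℝ) (q : β → ℝ) (γ : α → β → ℝ) : Prop :=
  (∀ i j, 0 ≤ γ i j) ∧ (∀ i, ∑ j, γ i j = p i) ∧ (∀ j, ∑ i, γ i j = q j)

def graphPlan [DecidableEq β] (σ : α → β) (w : ℝ) : α → β → ℝ :=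
  fun i j => if σ i = j then w else 0

theorem isTransportPlan_graphPlan [DecidableEq β] (σ : α → β) {w : ℝ} (hw : 0 ≤ w) :
    IsTransportPlan (fun _ => w) (fun s => #{i | σ i = s} * w) (graphPlan σ w) := by
  refine ⟨fun i j => ?_, fun i => ?_, fun j => ?_⟩
  · unfold graphPlan
    split_ifs <;> simp [hw]
  · simp [graphPlan]
  · simp [graphPlan, sum_ite]

theorem sum_graphPlan_mul [DecidableEq β] (σ : α → β) (w : ℝ) (c : α → β → ℝ) :
    ∑ i, ∑ j, graphPlan σ w i j * c i j = w * ∑ i, c i (σ i) := by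
  simp [graphPlan, ite_mul, mul_sum]

theorem exists_assignment_le_of_isTransportPlan [DecidableEq β] {N : ℕ} (hN : 0 < N)
    {m : β → ℕ} (e : Fin N ≃ Σ s, Fin (m s)) {γ : Fin N → β → ℝ}
    (hγ : IsTransportPlan (fun _ => 1 / (N : ℝ)) (fun s => (m s : ℝ) / N) γ)
    (c : Fin N → β → ℝ) :
    ∃ σ : Fin N → β, (∀ s, #{i | σ i = s} = m s) ∧
      ∑ i, c i (σ i) ≤ N * ∑ i, ∑ j, γ i j * c i j := by
  obtain ⟨hγ_nonneg, hrow, hcol⟩ := hγ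
  have hN' : (N : ℝ) ≠ 0 := by positivity
  have hvanish : ∀ i s, m s = 0 → γ i s = 0 := fun i s hs =>
    (sum_eq_zero_iff_of_nonneg fun i _ => hγ_nonneg i s).1 (by simp [hcol, hs]) i (mem_univ i)
  set D : Matrix (Fin N) (Fin N) ℝ := fun i j => N * γ i (e j).1 / m (e j).1
  have hD : D ∈ doublyStochastic ℝ (Fin N) := by
    refine mem_doublyStochastic_iff_sum.2 ⟨fun i j => ?_, fun i => ?_, fun j => ?_⟩
    · exact div_nonneg (mul_nonneg N.cast_nonneg (hγ_nonneg _ _)) (Nat.cast_nonneg _)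
    · rw [e.sum_comp (fun x => N * γ i x.1 / m x.1),
        sum_sigma_fin_div_eq_sum (fun s => N * γ i s) fun s hs => by simp [hvanish i s hs],
        ← mul_sum, hrow]
      field_simp
    · have : (m (e j).1 : ℝ) ≠ 0 := by exact_mod_cast (Fin.pos (e j).2).ne'
      simp only [D, ← sum_div, ← mul_sum, hcol]
      field_simp
  obtain ⟨π, hπ⟩ := exists_perm_sum_le_of_mem_doublyStochastic hD fun i j => c i (e j).1
  refine ⟨fun i => (e (π i)).1, card_filter_sigma_fst_eq (π.trans e), le_of_le_of_eq hπ ?_⟩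
  simp only [mul_sum]
  refine sum_congr rfl fun i _ => ?_
  rw [e.sum_comp (fun x => N * γ i x.1 / m x.1 * c i x.1)]
  simp only [div_mul_eq_mul_div, mul_assoc]
  exact sum_sigma_fin_div_eq_sum (fun s => N * (γ i s * c i s)) fun s hs => by
    simp [hvanish i s hs]

end

theorem stmt0_general (N S : ℕ) (hN : 0 < N)
    (c : Fin N → Fin S → ℝ) (m : Fin S → ℕ) (hm : ∑ s, m s = N) :
    ∃ σ₀ : Fin N → Fin S,
      (∀ s, (Finset.univ.filter (fun i => σ₀ i = s)).card = m s) ∧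
      (∀ σ : Fin N → Fin S,
        (∀ s, (Finset.univ.filter (fun i => σ i = s)).card = m s) →
        ∑ i, c i (σ₀ i) ≤ ∑ i, c i (σ i)) ∧
      discreteOT (fun _ : Fin N => 1 / (N : ℝ)) (fun s => (m s : ℝ) / N) c
        = (1 / (N : ℝ)) * ∑ i, c i (σ₀ i) := by
  have e : Fin N ≃ Σ s, Fin (m s) := Fintype.equivOfCardEq (by simp [hm])
  obtain ⟨σ₀, hσ₀, hmin⟩ := Set.exists_min_image {σ : Fin N → Fin S | ∀ s, #{i | σ i = s} = m s}
    (fun σ => ∑ i, c i (σ i)) (Set.toFinite _) ⟨_, card_filter_sigma_fst_eq e⟩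
  refine ⟨σ₀, hσ₀, hmin, IsLeast.csInf_eq ⟨?_, ?_⟩⟩
  · obtain ⟨h₀, hrow, hcol⟩ := isTransportPlan_graphPlan σ₀ (w := 1 / (N : ℝ)) (by positivity)
    refine ⟨graphPlan σ₀ (1 / N), h₀, hrow, fun s => ?_, (sum_graphPlan_mul σ₀ _ c).symm⟩
    rw [hcol]
    dsimp only
    rw [hσ₀ s, mul_one_div]
  · rintro v ⟨γ, h₀, hrow, hcol, rfl⟩
    obtain ⟨σ, hσ, hle⟩ := exists_assignment_le_of_isTransportPlan hN e ⟨h₀, hrow, hcol⟩ c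
    have hN' : (0 : ℝ) < N := by exact_mod_cast hN
    calc 1 / (N : ℝ) * ∑ i, c i (σ₀ i)
        ≤ 1 / N * (N * ∑ i, ∑ j, γ i j * c i j) := by gcongr; exact (hmin σ hσ).trans hle
      _ = ∑ i, ∑ j, γ i j * c i j := by field_simp

/-- **Monge–Kantorovich identity (Eq. (47))**: with uniform source weights `1/N` and
target weights `m s / N` (where `∑ s, m s = N`), the discrete Kantorovich cost equals
`(1/N)` times the minimum of `∑ i, c i (σ i)` over assignment maps `σ : Fin N → Fin S`
whose fiber over each `s` has exactly `m s` elements; in particular the set of such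
assignments is nonempty and the minimum is attained. -/
theorem stmt0 (N S : ℕ) (hN : 0 < N) (hS : 0 < S)
    (c : Fin N → Fin S → ℝ) (m : Fin S → ℕ) (hm : ∑ s, m s = N) :
    ∃ σ₀ : Fin N → Fin S,
      (∀ s, (Finset.univ.filter (fun i => σ₀ i = s)).card = m s) ∧
      (∀ σ : Fin N → Fin S,
        (∀ s, (Finset.univ.filter (fun i => σ i = s)).card = m s) →
        ∑ i, c i (σ₀ i) ≤ ∑ i, c i (σ i)) ∧
      discreteOT (fun _ : Fin N => 1 / (N : ℝ)) (fun s => (m s : ℝ) / N) c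
        = (1 / (N : ℝ)) * ∑ i, c i (σ₀ i) :=
  stmt0_general N S hN c m hm
end

section
/- Fix data points x : Fin N → ℝ^n, a nonnegative cost d_x : ℝ^n → ℝ^n → ℝ, and let C = (Fin K)^Q be the finite set of codeword index tuples, with K^Q < N. Then the infimum, over all decoders f : C → ℝ^n and all probability vectors γ on C each of whose entries is an integer multiple of 1/N, of the discrete Kantorovich cost OT(u, γ, (i, c) ↦ d_x (x i) (f c)) — where u is the uniform vector u i = 1/N on Fin N — equals the infimum, over all decoders f : C → ℝ^n and all assignment functions σ : Fin N → C, of (1/N) ∑_i d_x (x i) (f (σ i)); moreover, for each fixed f and γ the optimal σ may be taken to have fibers of sizes |σ⁻¹({c})| = N·γ(c) for every c ∈ C. -/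
open Finset

private noncomputable def pc (t : ℝ) (k : ℕ) : ℝ := min t ((k:ℝ)+1) - min t (k:ℝ)

private lemma pc_eq (t : ℝ) (k : ℕ) : pc t k = max (k:ℝ) (min ((k:ℝ)+1) t) - k := by
  unfold pc; simp only [min_def, max_def]; split_ifs <;> linarith

private lemma pc_mono {t1 t2 : ℝ} (h : t1 ≤ t2) (k : ℕ) : pc t1 k ≤ pc t2 k := by
  rw [pc_eq, pc_eq]
  exact sub_le_sub_right (max_le_max le_rfl (min_le_min le_rfl h)) _

private lemma pc_nonneg (t : ℝ) (k : ℕ) : 0 ≤ pc t k :=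
  sub_nonneg.2 (min_le_min le_rfl (by linarith))

private lemma pc_sum (t : ℝ) (ht : 0 ≤ t) (m : ℕ) (htm : t ≤ m) :
    ∑ k ∈ Finset.range m, pc t k = t := by
  have h : ∀ k ∈ Finset.range m, pc t k = (fun k : ℕ => min t (k:ℝ)) (k+1) - (fun k : ℕ => min t (k:ℝ)) k := by
    intro k _; simp only [pc]; push_cast; ring_nf
  rw [Finset.sum_congr rfl h, Finset.sum_range_sub (fun k : ℕ => min t (k:ℝ))]
  simp [min_eq_left htm, min_eq_left ht, ht]

private lemma pc_one (m k : ℕ) (hk : k < m) : pc (m:ℝ) k = 1 := by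
  have h1 : (k:ℝ)+1 ≤ m := by exact_mod_cast Nat.succ_le_of_lt hk
  unfold pc
  rw [min_eq_right h1, min_eq_right (by linarith)]
  ring

private lemma pc_zero (k : ℕ) : pc 0 k = 0 := by
  unfold pc
  rw [min_eq_left (by positivity), min_eq_left (Nat.cast_nonneg k)]
  ring

/-- Fiber count in a sigma type. -/
private lemma sigma_fiber_card {C : Type*} [Fintype C] [DecidableEq C] (m : C → ℕ) (c : C) :
    (Finset.univ.filter (fun u : Σ c : C, Fin (m c) => u.1 = c)).card = m c := by
  rw [Finset.card_filter, ← Finset.univ_sigma_univ, Finset.sum_sigma]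
  simp [apply_ite Finset.card, Finset.sum_ite_eq']

/-- Core lemma: a feasible transport plan with uniform rows and integer column masses is
dominated by an assignment with exactly those fiber sizes. -/
private lemma exists_assignment_le {C : Type*} [Fintype C] [DecidableEq C]
    {N : ℕ} (m : C → ℕ) (hNm : ∑ c, m c = N)
    (B : Fin N → C → ℝ) (hB0 : ∀ i c, 0 ≤ B i c)
    (hBrow : ∀ i, ∑ c, B i c = 1) (hBcol : ∀ c, ∑ i, B i c = (m c : ℝ))
    (cost : Fin N → C → ℝ) :
    ∃ σ : Fin N → C,
      (∀ c, (Finset.univ.filter (fun i => σ i = c)).card = m c) ∧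
      ∑ i, cost i (σ i) ≤ ∑ i, ∑ c, B i c * cost i c := by
  classical
  have hcard : Fintype.card (Σ c : C, Fin (m c)) = N := by simp [hNm]
  let e : (Σ c : C, Fin (m c)) ≃ Fin N := Fintype.equivFinOfCardEq hcard
  -- cumulative sums
  set Bn : ℕ → C → ℝ := fun i c => if h : i < N then B ⟨i, h⟩ c else 0 with hBn
  have hBn0 : ∀ i c, 0 ≤ Bn i c := by
    intro i c; simp only [hBn]; split <;> [exact hB0 _ _; exact le_rfl]
  set S : C → ℕ → ℝ := fun c i => ∑ i' ∈ Finset.range i, Bn i' c with hS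
  have hSmono : ∀ c {i j : ℕ}, i ≤ j → S c i ≤ S c j := by
    intro c i j hij
    exact Finset.sum_le_sum_of_subset_of_nonneg (Finset.range_subset_range.2 hij)
      (fun k _ _ => hBn0 k c)
  have hS0 : ∀ c, S c 0 = 0 := by intro c; simp [hS]
  have hSN : ∀ c, S c N = (m c : ℝ) := by
    intro c
    have : S c N = ∑ i : Fin N, Bn i c := (Fin.sum_univ_eq_sum_range (fun i => Bn i c) N).symm
    rw [this, ← hBcol c]
    refine Finset.sum_congr rfl fun i _ => ?_
    simp [hBn, i.isLt]
  have hSnn : ∀ c i, 0 ≤ S c i := fun c i => by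
    rw [← hS0 c]; exact hSmono c (Nat.zero_le i)
  have hSstep : ∀ c (i : Fin N), S c ((i:ℕ)+1) - S c (i:ℕ) = B i c := by
    intro c i
    simp only [hS, Finset.sum_range_succ, add_sub_cancel_left]
    simp [hBn, i.isLt]
  -- the split doubly stochastic matrix
  set M : Matrix (Fin N) (Fin N) ℝ := fun i j =>
    pc (S (e.symm j).1 ((i:ℕ)+1)) ((e.symm j).2 : ℕ) - pc (S (e.symm j).1 (i:ℕ)) ((e.symm j).2 : ℕ)
    with hM
  have hrowpart : ∀ (i : Fin N) (c : C),
      ∑ k : Fin (m c), (pc (S c ((i:ℕ)+1)) (k:ℕ) - pc (S c (i:ℕ)) (k:ℕ)) = B i c := by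
    intro i c
    rw [Finset.sum_sub_distrib]
    rw [Fin.sum_univ_eq_sum_range (fun k => pc (S c ((i:ℕ)+1)) k) (m c),
        Fin.sum_univ_eq_sum_range (fun k => pc (S c (i:ℕ)) k) (m c)]
    rw [pc_sum _ (hSnn c _) _ (by rw [← hSN c]; exact hSmono c i.isLt),
        pc_sum _ (hSnn c _) _ (by rw [← hSN c]; exact hSmono c i.isLt.le)]
    exact hSstep c i
  have hMds : M ∈ doublyStochastic ℝ (Fin N) := by
    rw [mem_doublyStochastic_iff_sum]
    refine ⟨fun i j => sub_nonneg.2 (pc_mono (hSmono _ (Nat.le_succ _)) _), fun i => ?_, fun j => ?_⟩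
    · have h1 := Fintype.sum_equiv e
        (fun u : Σ c : C, Fin (m c) => pc (S u.1 ((i:ℕ)+1)) (u.2:ℕ) - pc (S u.1 (i:ℕ)) (u.2:ℕ))
        (fun j => M i j)
        (fun u => by simp only [hM]; rw [Equiv.symm_apply_apply])
      rw [← h1, ← Finset.univ_sigma_univ, Finset.sum_sigma]
      simp only [hrowpart i]
      exact hBrow i
    · -- column sums
      set c := (e.symm j).1
      set k := ((e.symm j).2 : ℕ)
      have hk : k < m c := (e.symm j).2.isLt
      have h1 : ∑ i, M i j = ∑ i ∈ Finset.range N,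
          ((fun i => pc (S c i) k) (i+1) - (fun i => pc (S c i) k) i) := by
        rw [← Fin.sum_univ_eq_sum_range (fun i => (fun i => pc (S c i) k) (i+1) - (fun i => pc (S c i) k) i) N]
      rw [h1, Finset.sum_range_sub (fun i => pc (S c i) k), hSN c, hS0 c, pc_one _ _ hk, pc_zero]
      ring
  -- Birkhoff
  obtain ⟨w, hw0, hw1, hwM⟩ := exists_eq_sum_perm_of_mem_doublyStochastic hMds
  set V : Equiv.Perm (Fin N) → ℝ := fun π => ∑ i, cost i ((e.symm (π i)).1) with hV
  obtain ⟨π0, -, hπ0⟩ := Finset.exists_min_image Finset.univ V ⟨1, Finset.mem_univ 1⟩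
  -- cost of M equals the original plan cost
  have hMcost : ∑ i, ∑ j, M i j * cost i ((e.symm j).1) = ∑ i, ∑ c, B i c * cost i c := by
    refine Finset.sum_congr rfl fun i _ => ?_
    have h1 := Fintype.sum_equiv e
      (fun u : Σ c : C, Fin (m c) =>
        (pc (S u.1 ((i:ℕ)+1)) (u.2:ℕ) - pc (S u.1 (i:ℕ)) (u.2:ℕ)) * cost i u.1)
      (fun j => M i j * cost i ((e.symm j).1))
      (fun u => by simp only [hM]; rw [Equiv.symm_apply_apply])
    rw [← h1, ← Finset.univ_sigma_univ, Finset.sum_sigma]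
    refine Finset.sum_congr rfl fun c _ => ?_
    dsimp only
    rw [← Finset.sum_mul, hrowpart i c]
  -- permutation rows pick out single entries
  have hperm : ∀ (π : Equiv.Perm (Fin N)) (i : Fin N),
      ∑ j, (Equiv.Perm.permMatrix ℝ π) i j * cost i ((e.symm j).1) = cost i ((e.symm (π i)).1) := by
    intro π i
    simp [Equiv.Perm.permMatrix, PEquiv.toMatrix_apply, Equiv.toPEquiv_apply, ite_mul,
      Finset.sum_ite_eq]
  -- expand M via the permutation decomposition
  have hMcost2 : ∑ i, ∑ j, M i j * cost i ((e.symm j).1) = ∑ π : Equiv.Perm (Fin N), w π * V π := by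
    rw [← hwM]
    have e1 : ∀ i j, (∑ π : Equiv.Perm (Fin N), w π • Equiv.Perm.permMatrix ℝ π) i j
        = ∑ π : Equiv.Perm (Fin N), w π * (Equiv.Perm.permMatrix ℝ π) i j := by
      intro i j; simp [Matrix.sum_apply]
    simp only [e1, Finset.sum_mul, mul_assoc]
    have e2 : ∀ i : Fin N, ∑ j, ∑ π : Equiv.Perm (Fin N),
        w π * ((Equiv.Perm.permMatrix ℝ π) i j * cost i ((e.symm j).1))
        = ∑ π : Equiv.Perm (Fin N), ∑ j,
        w π * ((Equiv.Perm.permMatrix ℝ π) i j * cost i ((e.symm j).1)) :=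
      fun i => Finset.sum_comm
    simp only [e2]
    rw [Finset.sum_comm]
    refine Finset.sum_congr rfl fun π _ => ?_
    simp only [← Finset.mul_sum, hperm π, hV]
  -- the minimizing permutation beats M
  have hfinal : V π0 ≤ ∑ i, ∑ c, B i c * cost i c := by
    rw [← hMcost, hMcost2]
    calc V π0 = ∑ π : Equiv.Perm (Fin N), w π * V π0 := by rw [← Finset.sum_mul, hw1, one_mul]
    _ ≤ ∑ π : Equiv.Perm (Fin N), w π * V π :=
      Finset.sum_le_sum fun π _ => mul_le_mul_of_nonneg_left (hπ0 π (Finset.mem_univ π)) (hw0 π)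
  refine ⟨fun i => (e.symm (π0 i)).1, fun c => ?_, hfinal⟩
  have h2 : (Finset.univ.filter fun i : Fin N => (e.symm (π0 i)).1 = c).card
      = (Finset.univ.filter fun j : Fin N => (e.symm j).1 = c).card := by
    refine Finset.card_bij' (fun a _ => π0 a) (fun b _ => π0.symm b) ?_ ?_ ?_ ?_ <;>
      simp +contextual [Finset.mem_filter]
  have h3 : (Finset.univ.filter fun j : Fin N => (e.symm j).1 = c).card
      = (Finset.univ.filter fun u : Σ c : C, Fin (m c) => u.1 = c).card := by
    refine Finset.card_bij' (fun a _ => e.symm a) (fun b _ => e b) ?_ ?_ ?_ ?_ <;>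
      simp +contextual [Finset.mem_filter]
  rw [h2, h3, sigma_fiber_card]

/-- The transport plan induced by an assignment `σ`. -/
private lemma plan_of_sigma {C : Type*} [Fintype C] [DecidableEq C] {N : ℕ} (hN : 0 < N)
    (σ : Fin N → C) (cost : Fin N → C → ℝ) :
    ∃ γp : Fin N → C → ℝ, (∀ i c, 0 ≤ γp i c) ∧ (∀ i, ∑ c, γp i c = 1/(N:ℝ)) ∧
      (∀ c, ∑ i, γp i c = ((Finset.univ.filter fun i => σ i = c).card : ℝ)/N) ∧
      ∑ i, ∑ c, γp i c * cost i c = (1/(N:ℝ)) * ∑ i, cost i (σ i) := by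
  classical
  have hNR : (0:ℝ) < N := by exact_mod_cast hN
  refine ⟨fun i c => if σ i = c then 1/(N:ℝ) else 0, ?_, ?_, ?_, ?_⟩
  · intro i c; exact ite_nonneg (by positivity) le_rfl
  · intro i; simp [Finset.sum_ite_eq]
  · intro c
    have h : ∑ i, (if σ i = c then (1:ℝ)/N else 0)
        = ∑ i ∈ Finset.univ.filter (fun i => σ i = c), (1/(N:ℝ)) :=
      (Finset.sum_filter _ _).symm
    rw [h, Finset.sum_const, nsmul_eq_mul]
    ring
  · rw [Finset.mul_sum]
    refine Finset.sum_congr rfl fun i _ => ?_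
    simp [ite_mul, Finset.sum_ite_eq]

private lemma part2_aux {C : Type*} [Fintype C] [DecidableEq C] {N : ℕ} (hN : 0 < N)
    (cost : Fin N → C → ℝ) (hcost : ∀ i c, 0 ≤ cost i c)
    (γ : C → ℝ) (hγ1 : ∑ c, γ c = 1) (hγm : ∀ c, ∃ mc : ℕ, γ c = (mc:ℝ) / N) :
    ∃ σ : Fin N → C,
      (∀ c, ((Finset.univ.filter (fun i => σ i = c)).card : ℝ) = N * γ c) ∧
      discreteOT (fun _ : Fin N => 1 / (N : ℝ)) γ cost = (1/(N:ℝ)) * ∑ i, cost i (σ i) := by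
  classical
  have hNR : (0:ℝ) < N := by exact_mod_cast hN
  set m : C → ℕ := fun c => (hγm c).choose with hmdef
  have hm : ∀ c, γ c = (m c : ℝ) / N := fun c => (hγm c).choose_spec
  have hNm : ∑ c, m c = N := by
    have h1 : (∑ c, ((m c : ℝ))) / (N:ℝ) = 1 := by
      rw [Finset.sum_div]
      rw [show ∑ c, (m c : ℝ)/N = ∑ c, γ c from Finset.sum_congr rfl (fun c _ => (hm c).symm)]
      exact hγ1
    have h2 : ((∑ c, m c : ℕ) : ℝ) = (N:ℝ) := by
      push_cast
      rw [div_eq_one_iff_eq hNR.ne'] at h1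
      exact h1
    exact_mod_cast h2
  -- a σ with the right fibers exists
  obtain ⟨σ0, hσ0, -⟩ := exists_assignment_le m hNm (fun _ c => (m c : ℝ)/N)
    (fun i c => by positivity)
    (fun i => by rw [← Finset.sum_div]; rw [show (∑ c, ((m c : ℝ))) = ((∑ c, m c : ℕ) : ℝ) by push_cast; rfl, hNm]; exact div_self hNR.ne')
    (fun c => by rw [Finset.sum_const, Finset.card_univ, Fintype.card_fin, nsmul_eq_mul]; field_simp)
    (fun _ _ => 0)
  -- minimizer over assignments with the right fibers
  set Aset : Finset (Fin N → C) :=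
    Finset.univ.filter (fun σ : Fin N → C =>
      ∀ c, (Finset.univ.filter fun i => σ i = c).card = m c) with hAdef
  obtain ⟨σs, hσsA, hσsmin⟩ := Finset.exists_min_image Aset (fun σ => ∑ i, cost i (σ i))
    ⟨σ0, Finset.mem_filter.2 ⟨Finset.mem_univ _, hσ0⟩⟩
  have hσsfib : ∀ c, (Finset.univ.filter fun i => σs i = c).card = m c :=
    (Finset.mem_filter.1 hσsA).2
  set P : Set ℝ := { v : ℝ | ∃ g : Fin N → C → ℝ,
    (∀ i j, 0 ≤ g i j) ∧ (∀ i, ∑ j, g i j = 1/(N:ℝ)) ∧ (∀ j, ∑ i, g i j = γ j) ∧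
    v = ∑ i, ∑ j, g i j * cost i j } with hPdef
  have hOT : discreteOT (fun _ : Fin N => 1 / (N : ℝ)) γ cost = sInf P := rfl
  have hPbdd : BddBelow P := by
    refine ⟨0, ?_⟩
    rintro v ⟨g, hg0, -, -, rfl⟩
    exact Finset.sum_nonneg fun i _ => Finset.sum_nonneg fun c _ =>
      mul_nonneg (hg0 i c) (hcost i c)
  obtain ⟨γp, hp0, hprow, hpcol, hpcost⟩ := plan_of_sigma hN σs cost
  have hmem : (1/(N:ℝ)) * ∑ i, cost i (σs i) ∈ P := by
    refine ⟨γp, hp0, hprow, fun c => ?_, hpcost.symm⟩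
    rw [hpcol c, hσsfib c, hm c]
  have hge : ∀ v ∈ P, (1/(N:ℝ)) * ∑ i, cost i (σs i) ≤ v := by
    rintro v ⟨g, hg0, hgrow, hgcol, rfl⟩
    obtain ⟨σ', hσ'fib, hσ'le⟩ := exists_assignment_le m hNm (fun i c => (N:ℝ) * g i c)
      (fun i c => mul_nonneg hNR.le (hg0 i c))
      (fun i => by rw [← Finset.mul_sum, hgrow i]; field_simp)
      (fun c => by rw [← Finset.mul_sum, hgcol c, hm c]; field_simp)
      cost
    have h5 : ∑ i, ∑ c, ((N:ℝ) * g i c) * cost i c = N * ∑ i, ∑ c, g i c * cost i c := by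
      simp [Finset.mul_sum, mul_assoc]
    have h6 : ∑ i, cost i (σs i) ≤ ∑ i, cost i (σ' i) :=
      hσsmin σ' (Finset.mem_filter.2 ⟨Finset.mem_univ _, hσ'fib⟩)
    have h7 : ∑ i, cost i (σs i) ≤ N * ∑ i, ∑ c, g i c * cost i c := by
      rw [← h5]; exact h6.trans hσ'le
    calc (1/(N:ℝ)) * ∑ i, cost i (σs i)
        ≤ (1/(N:ℝ)) * ((N:ℝ) * ∑ i, ∑ c, g i c * cost i c) :=
          mul_le_mul_of_nonneg_left h7 (by positivity)
      _ = ∑ i, ∑ c, g i c * cost i c := by field_simp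
  refine ⟨σs, fun c => ?_, ?_⟩
  · rw [hσsfib c, hm c]; field_simp
  · rw [hOT]
    exact le_antisymm (csInf_le hPbdd hmem) (le_csInf ⟨_, hmem⟩ hge)

/-- **Lemma 1 of the paper (distortion form)**: with data `x : Fin N → ℝ^n`, nonnegative
cost `d_x`, and the finite set `C = (Fin K)^Q` of codeword index tuples with `K^Q < N`,
the infimum over decoders `f` and probability vectors `γ` on `C` with entries integer
multiples of `1/N` of the Kantorovich cost `OT(u, γ, (i,c) ↦ d_x (x i) (f c))` equals the
infimum over decoders `f` and assignments `σ : Fin N → C` of `(1/N) ∑ i, d_x (x i) (f (σ i))`;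
moreover for each fixed `f` and `γ` an optimal `σ` may be taken with fiber sizes `N · γ c`. -/
theorem stmt1 (N n K Q : ℕ) (hN : 0 < N) (hKQ : K ^ Q < N)
    (x : Fin N → EuclideanSpace ℝ (Fin n))
    (dx : EuclideanSpace ℝ (Fin n) → EuclideanSpace ℝ (Fin n) → ℝ)
    (hdx : ∀ a b, 0 ≤ dx a b) :
    (sInf { v : ℝ | ∃ (f : (Fin Q → Fin K) → EuclideanSpace ℝ (Fin n))
        (γ : (Fin Q → Fin K) → ℝ),
        (∀ c, 0 ≤ γ c) ∧ (∑ c, γ c = 1) ∧ (∀ c, ∃ mc : ℕ, γ c = (mc : ℝ) / N) ∧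
        v = discreteOT (fun _ : Fin N => 1 / (N : ℝ)) γ (fun i c => dx (x i) (f c)) }
      = sInf { v : ℝ | ∃ (f : (Fin Q → Fin K) → EuclideanSpace ℝ (Fin n))
          (σ : Fin N → (Fin Q → Fin K)),
          v = (1 / (N : ℝ)) * ∑ i, dx (x i) (f (σ i)) })
    ∧ ∀ (f : (Fin Q → Fin K) → EuclideanSpace ℝ (Fin n)) (γ : (Fin Q → Fin K) → ℝ),
        (∀ c, 0 ≤ γ c) → (∑ c, γ c = 1) → (∀ c, ∃ mc : ℕ, γ c = (mc : ℝ) / N) →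
        ∃ σ : Fin N → (Fin Q → Fin K),
          (∀ c, ((Finset.univ.filter (fun i => σ i = c)).card : ℝ) = N * γ c) ∧
          discreteOT (fun _ : Fin N => 1 / (N : ℝ)) γ (fun i c => dx (x i) (f c))
            = (1 / (N : ℝ)) * ∑ i, dx (x i) (f (σ i)) := by
  classical
  have hNR : (0:ℝ) < N := by exact_mod_cast hN
  have part2 : ∀ (f : (Fin Q → Fin K) → EuclideanSpace ℝ (Fin n)) (γ : (Fin Q → Fin K) → ℝ),
      (∑ c, γ c = 1) → (∀ c, ∃ mc : ℕ, γ c = (mc : ℝ) / N) →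
      ∃ σ : Fin N → (Fin Q → Fin K),
        (∀ c, ((Finset.univ.filter (fun i => σ i = c)).card : ℝ) = N * γ c) ∧
        discreteOT (fun _ : Fin N => 1 / (N : ℝ)) γ (fun i c => dx (x i) (f c))
          = (1 / (N : ℝ)) * ∑ i, dx (x i) (f (σ i)) := by
    intro f γ h1 hm2
    exact part2_aux hN (fun i c => dx (x i) (f c)) (fun i c => hdx _ _) γ h1 hm2
  refine ⟨?_, fun f γ h0 h1 hm2 => part2 f γ h1 hm2⟩
  rcases isEmpty_or_nonempty (Fin Q → Fin K) with hE | hNE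
  · -- no codewords at all: both sets are empty
    have h1 : { v : ℝ | ∃ (f : (Fin Q → Fin K) → EuclideanSpace ℝ (Fin n))
        (γ : (Fin Q → Fin K) → ℝ),
        (∀ c, 0 ≤ γ c) ∧ (∑ c, γ c = 1) ∧ (∀ c, ∃ mc : ℕ, γ c = (mc : ℝ) / N) ∧
        v = discreteOT (fun _ : Fin N => 1 / (N : ℝ)) γ (fun i c => dx (x i) (f c)) }
        = (∅ : Set ℝ) := by
      ext v
      simp only [Set.mem_setOf_eq, Set.mem_empty_iff_false, iff_false, not_exists]
      rintro f γ ⟨-, hs, -, -⟩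
      rw [Finset.univ_eq_empty] at hs
      simp at hs
    have h2 : { v : ℝ | ∃ (f : (Fin Q → Fin K) → EuclideanSpace ℝ (Fin n))
          (σ : Fin N → (Fin Q → Fin K)),
          v = (1 / (N : ℝ)) * ∑ i, dx (x i) (f (σ i)) } = (∅ : Set ℝ) := by
      ext v
      simp only [Set.mem_setOf_eq, Set.mem_empty_iff_false, iff_false, not_exists]
      rintro f σ -
      exact hE.false (σ ⟨0, hN⟩)
    rw [h1, h2]
  · obtain ⟨c0⟩ := hNE
    have hOTnonneg : ∀ (f : (Fin Q → Fin K) → EuclideanSpace ℝ (Fin n))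
        (γ : (Fin Q → Fin K) → ℝ),
        0 ≤ discreteOT (fun _ : Fin N => 1 / (N : ℝ)) γ (fun i c => dx (x i) (f c)) := by
      intro f γ
      apply Real.sInf_nonneg
      rintro v ⟨g, hg0, -, -, rfl⟩
      exact Finset.sum_nonneg fun i _ => Finset.sum_nonneg fun c _ =>
        mul_nonneg (hg0 i c) (hdx _ _)
    have hLbdd : BddBelow { v : ℝ | ∃ (f : (Fin Q → Fin K) → EuclideanSpace ℝ (Fin n))
        (γ : (Fin Q → Fin K) → ℝ),
        (∀ c, 0 ≤ γ c) ∧ (∑ c, γ c = 1) ∧ (∀ c, ∃ mc : ℕ, γ c = (mc : ℝ) / N) ∧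
        v = discreteOT (fun _ : Fin N => 1 / (N : ℝ)) γ (fun i c => dx (x i) (f c)) } := by
      refine ⟨0, ?_⟩
      rintro v ⟨f, γ, -, -, -, rfl⟩
      exact hOTnonneg f γ
    have hRbdd : BddBelow { v : ℝ | ∃ (f : (Fin Q → Fin K) → EuclideanSpace ℝ (Fin n))
          (σ : Fin N → (Fin Q → Fin K)),
          v = (1 / (N : ℝ)) * ∑ i, dx (x i) (f (σ i)) } := by
      refine ⟨0, ?_⟩
      rintro v ⟨f, σ, rfl⟩
      exact mul_nonneg (by positivity) (Finset.sum_nonneg fun i _ => hdx _ _)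
    have hsub : { v : ℝ | ∃ (f : (Fin Q → Fin K) → EuclideanSpace ℝ (Fin n))
        (γ : (Fin Q → Fin K) → ℝ),
        (∀ c, 0 ≤ γ c) ∧ (∑ c, γ c = 1) ∧ (∀ c, ∃ mc : ℕ, γ c = (mc : ℝ) / N) ∧
        v = discreteOT (fun _ : Fin N => 1 / (N : ℝ)) γ (fun i c => dx (x i) (f c)) }
        ⊆ { v : ℝ | ∃ (f : (Fin Q → Fin K) → EuclideanSpace ℝ (Fin n))
          (σ : Fin N → (Fin Q → Fin K)),
          v = (1 / (N : ℝ)) * ∑ i, dx (x i) (f (σ i)) } := by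
      rintro v ⟨f, γ, -, h1, hm2, rfl⟩
      obtain ⟨σ, -, heq⟩ := part2 f γ h1 hm2
      exact ⟨f, σ, heq⟩
    have hLne : { v : ℝ | ∃ (f : (Fin Q → Fin K) → EuclideanSpace ℝ (Fin n))
        (γ : (Fin Q → Fin K) → ℝ),
        (∀ c, 0 ≤ γ c) ∧ (∑ c, γ c = 1) ∧ (∀ c, ∃ mc : ℕ, γ c = (mc : ℝ) / N) ∧
        v = discreteOT (fun _ : Fin N => 1 / (N : ℝ)) γ (fun i c => dx (x i) (f c)) }.Nonempty := by
      refine ⟨_, fun _ => 0, fun c => if c = c0 then 1 else 0, ?_, ?_, ?_, rfl⟩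
      · intro c; exact ite_nonneg zero_le_one le_rfl
      · simp
      · intro c
        by_cases h : c = c0
        · exact ⟨N, by simp [h, div_self hNR.ne']⟩
        · exact ⟨0, by simp [h]⟩
    refine le_antisymm ?_ (csInf_le_csInf hRbdd hLne hsub)
    refine le_csInf ⟨_, fun _ => 0, fun _ => c0, rfl⟩ ?_
    rintro v ⟨f, σ, rfl⟩
    set cost : Fin N → (Fin Q → Fin K) → ℝ := fun i c => dx (x i) (f c) with hcostdef
    set γσ : (Fin Q → Fin K) → ℝ :=
      fun c => (((Finset.univ.filter fun i => σ i = c).card : ℕ) : ℝ)/N with hγσdef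
    have hsum1 : ∑ c, γσ c = 1 := by
      rw [hγσdef, ← Finset.sum_div]
      have hcard := Finset.card_eq_sum_card_fiberwise
        (f := σ) (s := Finset.univ) (t := Finset.univ) (fun x _ => Finset.mem_univ _)
      rw [Finset.card_univ, Fintype.card_fin] at hcard
      rw [show ∑ c, (((Finset.univ.filter fun i => σ i = c).card : ℕ) : ℝ) = ((N:ℕ):ℝ) by
        rw [← Nat.cast_sum]; exact Nat.cast_inj.2 hcard.symm]
      exact div_self hNR.ne'
    have hOTmem : discreteOT (fun _ : Fin N => 1 / (N : ℝ)) γσ cost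
        ∈ { v : ℝ | ∃ (f : (Fin Q → Fin K) → EuclideanSpace ℝ (Fin n))
        (γ : (Fin Q → Fin K) → ℝ),
        (∀ c, 0 ≤ γ c) ∧ (∑ c, γ c = 1) ∧ (∀ c, ∃ mc : ℕ, γ c = (mc : ℝ) / N) ∧
        v = discreteOT (fun _ : Fin N => 1 / (N : ℝ)) γ (fun i c => dx (x i) (f c)) } :=
      ⟨f, γσ, fun c => by positivity, hsum1, fun c => ⟨_, rfl⟩, rfl⟩
    have hle2 : discreteOT (fun _ : Fin N => 1 / (N : ℝ)) γσ cost
        ≤ (1/(N:ℝ)) * ∑ i, cost i (σ i) := by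
      obtain ⟨γp, hp0, hprow, hpcol, hpcost⟩ := plan_of_sigma hN σ cost
      have hOT : discreteOT (fun _ : Fin N => 1 / (N : ℝ)) γσ cost
          = sInf { v : ℝ | ∃ g : Fin N → (Fin Q → Fin K) → ℝ,
            (∀ i j, 0 ≤ g i j) ∧ (∀ i, ∑ j, g i j = 1/(N:ℝ)) ∧ (∀ j, ∑ i, g i j = γσ j) ∧
            v = ∑ i, ∑ j, g i j * cost i j } := rfl
      rw [hOT]
      refine csInf_le ⟨0, ?_⟩ ⟨γp, hp0, hprow, hpcol, hpcost.symm⟩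
      rintro w ⟨g, hg0, -, -, rfl⟩
      exact Finset.sum_nonneg fun i _ => Finset.sum_nonneg fun c _ =>
        mul_nonneg (hg0 i c) (hdx _ _)
    exact (csInf_le hLbdd hOTmem).trans hle2
end

section
/- Let C be a nonempty finite type, f : C → ℝ^n any function, γ a probability measure on C, P a Borel probability measure on ℝ^n, and d : ℝ^n → ℝ^n → ℝ≥0∞ a Borel-measurable cost. Then W_d(f#γ, P) — the infimum of ∫ d(y, x) dπ(y, x) over all probability measures π on ℝ^n × ℝ^n whose first marginal is the pushforward f#γ and whose second marginal is P — equals the infimum, over all Markov kernels κ from ℝ^n to C whose mixture ∫ κ(x, ·) dP(x) equals γ, of ∫_{ℝ^n} ∑_{c ∈ C} κ(x, {c}) · d(f c, x) dP(x). -/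
open MeasureTheory ProbabilityTheory ENNReal

/-!
Both sides are the optimal transport cost between `γ` and `P` for the cost
`(c, x) ↦ d (f c) x`. By disintegration, the couplings of `γ` and `P` on `C × ℝ^n` are exactly
the measures `(P ⊗ₘ κ).map swap` with `κ` a Markov kernel of mixture `γ`, and the cost of such a
coupling is the integral on the right. That cost equals `W_d(f#γ, P)`: couplings push forward
along `f × id`, and conversely a coupling `π = f#γ ⊗ₘ η` of `f#γ` and `P` is the pushforward of
`γ ⊗ₘ (η ∘ f)`, which glues `π` to the deterministic coupling of `γ` and `f#γ`.
-/

/-- Kantorovich cost `W_c(μ, ν)`: the infimum of `∫ c(x, y) dπ(x, y)` over all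
probability measures `π` on the product whose first marginal is `μ` and whose
second marginal is `ν`. -/
noncomputable def Wcost {X Y : Type*} [MeasurableSpace X] [MeasurableSpace Y]
    (c : X → Y → ℝ≥0∞) (μ : Measure X) (ν : Measure Y) : ℝ≥0∞ :=
  ⨅ (π : Measure (X × Y)) (_ : IsProbabilityMeasure π)
    (_ : π.fst = μ) (_ : π.snd = ν), ∫⁻ p, c p.1 p.2 ∂π

namespace MeasureTheory.Measure

variable {Z Y X : Type*} [MeasurableSpace Z] [MeasurableSpace Y] [MeasurableSpace X]

lemma fst_map_prodMap_id (ρ : Measure (Z × X)) {f : Z → Y} (hf : Measurable f) :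
    (ρ.map (Prod.map f id)).fst = ρ.fst.map f := by
  rw [Measure.fst, Measure.fst, map_map measurable_fst (hf.prodMap measurable_id),
    map_map hf measurable_fst]
  rfl

lemma snd_map_prodMap_id (ρ : Measure (Z × X)) {f : Z → Y} (hf : Measurable f) :
    (ρ.map (Prod.map f id)).snd = ρ.snd := by
  rw [Measure.snd, Measure.snd, map_map measurable_snd (hf.prodMap measurable_id)]
  rfl

lemma map_prodMap_compProd_comap (μ : Measure Z) [SFinite μ] {f : Z → Y} (hf : Measurable f)
    (κ : Kernel Y X) [IsSFiniteKernel κ] :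
    (μ ⊗ₘ κ.comap f hf).map (Prod.map f id) = μ.map f ⊗ₘ κ := by
  ext s hs
  rw [map_apply (hf.prodMap measurable_id) hs, compProd_apply (by measurability),
    compProd_apply hs, lintegral_map (Kernel.measurable_kernel_prodMk_left hs) hf]
  rfl

end MeasureTheory.Measure

section
variable {Z Y X : Type*} [MeasurableSpace Z] [MeasurableSpace Y] [MeasurableSpace X]
  {c : Y → X → ℝ≥0∞} {f : Z → Y} {γ : Measure Z} {P : Measure X}

lemma Wcost_map_le_Wcost_comp (hc : Measurable (Function.uncurry c)) (hf : Measurable f) :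
    Wcost c (γ.map f) P ≤ Wcost (fun z x => c (f z) x) γ P := by
  refine le_iInf₂ fun ρ _ => le_iInf₂ fun hfst hsnd => ?_
  refine iInf₂_le_of_le (ρ.map (Prod.map f id))
    (Measure.isProbabilityMeasure_map (hf.prodMap measurable_id).aemeasurable)
    (iInf₂_le_of_le ?_ ?_ ?_)
  · rw [Measure.fst_map_prodMap_id ρ hf, hfst]
  · rw [Measure.snd_map_prodMap_id ρ hf, hsnd]
  · exact (lintegral_map hc (hf.prodMap measurable_id)).le

lemma Wcost_le_Wcost_map [StandardBorelSpace X] [Nonempty X] [IsProbabilityMeasure γ]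
    (hc : Measurable (Function.uncurry c)) (hf : Measurable f) :
    Wcost (fun z x => c (f z) x) γ P ≤ Wcost c (γ.map f) P := by
  refine le_iInf₂ fun π _ => le_iInf₂ fun hfst hsnd => ?_
  have hπ : γ.map f ⊗ₘ π.condKernel = π := by rw [← hfst]; exact π.disintegrate _
  set ρ := γ ⊗ₘ π.condKernel.comap f hf
  have hρ : ρ.map (Prod.map f id) = π := by
    rw [Measure.map_prodMap_compProd_comap γ hf, hπ]
  refine iInf₂_le_of_le ρ inferInstance (iInf₂_le_of_le (Measure.fst_compProd _ _) ?_ ?_)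
  · rw [← hsnd, ← hρ, Measure.snd_map_prodMap_id ρ hf]
  · rw [← hρ]
    exact (lintegral_map hc (hf.prodMap measurable_id)).ge

lemma Wcost_comp_eq_Wcost_map [StandardBorelSpace X] [Nonempty X] [IsProbabilityMeasure γ]
    (hc : Measurable (Function.uncurry c)) (hf : Measurable f) :
    Wcost (fun z x => c (f z) x) γ P = Wcost c (γ.map f) P :=
  le_antisymm (Wcost_le_Wcost_map hc hf) (Wcost_map_le_Wcost_comp hc hf)

end

section
variable {Z X : Type*} [MeasurableSpace Z] [MeasurableSpace X]
  {c : Z → X → ℝ≥0∞} {γ : Measure Z} {P : Measure X}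

lemma lintegral_map_swap_compProd [SFinite P] (κ : Kernel X Z) [IsSFiniteKernel κ]
    (hc : Measurable (Function.uncurry c)) :
    ∫⁻ p, c p.1 p.2 ∂(P ⊗ₘ κ).map Prod.swap = ∫⁻ x, ∫⁻ z, c z x ∂κ x ∂P := by
  rw [lintegral_map (f := fun p : Z × X => c p.1 p.2) hc measurable_swap]
  exact Measure.lintegral_compProd (f := fun p : X × Z => c p.2 p.1) (hc.comp measurable_swap)

lemma Wcost_eq_iInf_kernel [StandardBorelSpace Z] [Nonempty Z] [IsProbabilityMeasure P]
    (hc : Measurable (Function.uncurry c)) :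
    Wcost c γ P = ⨅ (κ : Kernel X Z) (_ : IsMarkovKernel κ) (_ : P.bind (fun x => κ x) = γ),
      ∫⁻ x, ∫⁻ z, c z x ∂κ x ∂P := by
  apply le_antisymm
  · refine le_iInf₂ fun κ _ => le_iInf fun hκ => ?_
    refine iInf₂_le_of_le ((P ⊗ₘ κ).map Prod.swap)
      (Measure.isProbabilityMeasure_map measurable_swap.aemeasurable) (iInf₂_le_of_le ?_ ?_ ?_)
    · rw [Measure.fst_map_swap, Measure.snd_compProd, ← hκ]
    · rw [Measure.snd_map_swap, Measure.fst_compProd]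
    · exact (lintegral_map_swap_compProd κ hc).le
  · refine le_iInf₂ fun π _ => le_iInf₂ fun hfst hsnd => ?_
    set σ := π.map Prod.swap
    have hσ : σ.fst = P := by rw [Measure.fst_map_swap, hsnd]
    have hπ : (P ⊗ₘ σ.condKernel).map Prod.swap = π := by
      rw [← hσ, σ.disintegrate, Measure.map_map measurable_swap measurable_swap,
        Prod.swap_swap_eq, Measure.map_id]
    refine iInf₂_le_of_le σ.condKernel inferInstance (iInf_le_of_le ?_ ?_)
    · have h := congrArg Measure.fst hπ
      rwa [Measure.fst_map_swap, Measure.snd_compProd, hfst] at h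
    · rw [← lintegral_map_swap_compProd _ hc, hπ]

end

/-- **Eq. (51), key identity in the proof of Theorem 1**: for a nonempty finite type `C`,
a decoder `f : C → ℝ^n`, a probability measure `γ` on `C`, a Borel probability measure `P`
on `ℝ^n` and a Borel-measurable cost `d`, the Wasserstein cost `W_d(f#γ, P)` equals the
infimum, over Markov kernels `κ` from `ℝ^n` to `C` whose mixture under `P` is `γ`, of
`∫ ∑_{c} κ(x, {c}) · d(f c, x) dP(x)`. -/
theorem stmt2 {n : ℕ} {C : Type*} [Fintype C] [Nonempty C]
    [MeasurableSpace C] [DiscreteMeasurableSpace C]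
    (f : C → EuclideanSpace ℝ (Fin n))
    (γ : Measure C) [IsProbabilityMeasure γ]
    (P : Measure (EuclideanSpace ℝ (Fin n))) [IsProbabilityMeasure P]
    (d : EuclideanSpace ℝ (Fin n) → EuclideanSpace ℝ (Fin n) → ℝ≥0∞)
    (hd : Measurable (Function.uncurry d)) :
    Wcost d (γ.map f) P =
      ⨅ (κ : Kernel (EuclideanSpace ℝ (Fin n)) C) (_ : IsMarkovKernel κ)
        (_ : P.bind (fun x => κ x) = γ),
        ∫⁻ x, ∑ c, κ x {c} * d (f c) x ∂P := by
  have hf : Measurable f := .of_discrete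
  rw [← Wcost_comp_eq_Wcost_map hd hf, Wcost_eq_iInf_kernel (c := fun z x => d (f z) x)
    (hd.comp (hf.prodMap measurable_id))]
  simp_rw [lintegral_fintype, mul_comm]
end

section
/- Let C be a nonempty finite type, f : C → ℝ^n any function, P a Borel probability measure on ℝ^n, and d : ℝ^n → ℝ^n → ℝ≥0∞ a Borel-measurable cost. Then the infimum, over all probability measures γ on C and all Markov kernels κ from ℝ^n to C whose mixture ∫ κ(x, ·) dP(x) equals γ, of ∫ ∑_{c ∈ C} κ(x, {c}) · d(f c, x) dP(x), equals the infimum over all Borel-measurable maps T̄ : ℝ^n → C of ∫ d(f (T̄ x), x) dP(x), and both are equal to ∫ (min_{c ∈ C} d(f c, x)) dP(x). -/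
open MeasureTheory ProbabilityTheory ENNReal

/-- **Reduction from stochastic to deterministic discrete encoders (Theorem 1's proof)**:
for a nonempty finite type `C`, a decoder `f : C → ℝ^n`, a Borel probability measure `P`
on `ℝ^n`, and a Borel-measurable cost `d`, the infimum over probability measures `γ` on
`C` and Markov kernels `κ` with mixture `γ` of `∫ ∑_c κ(x,{c}) · d(f c, x) dP(x)` equals
the infimum over Borel-measurable maps `T̄ : ℝ^n → C` of `∫ d(f (T̄ x), x) dP(x)`, and
both equal `∫ (min_c d(f c, x)) dP(x)`. -/
theorem stmt3 {n : ℕ} {C : Type*} [Fintype C] [Nonempty C]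
    [MeasurableSpace C] [DiscreteMeasurableSpace C]
    (f : C → EuclideanSpace ℝ (Fin n))
    (P : Measure (EuclideanSpace ℝ (Fin n))) [IsProbabilityMeasure P]
    (d : EuclideanSpace ℝ (Fin n) → EuclideanSpace ℝ (Fin n) → ℝ≥0∞)
    (hd : Measurable (Function.uncurry d)) :
    (⨅ (γ : Measure C) (_ : IsProbabilityMeasure γ)
       (κ : Kernel (EuclideanSpace ℝ (Fin n)) C) (_ : IsMarkovKernel κ)
       (_ : P.bind (fun x => κ x) = γ),
       ∫⁻ x, ∑ c, κ x {c} * d (f c) x ∂P)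
      = (⨅ (T : EuclideanSpace ℝ (Fin n) → C) (_ : Measurable T),
          ∫⁻ x, d (f (T x)) x ∂P)
    ∧ (⨅ (T : EuclideanSpace ℝ (Fin n) → C) (_ : Measurable T),
          ∫⁻ x, d (f (T x)) x ∂P)
      = ∫⁻ x, ⨅ c, d (f c) x ∂P := by
  classical
  have hdc : ∀ c : C, Measurable fun x : EuclideanSpace ℝ (Fin n) => d (f c) x := fun c =>
    hd.comp (measurable_prodMk_left (x := f c))
  have hinf : Measurable fun x : EuclideanSpace ℝ (Fin n) => ⨅ c, d (f c) x :=
    Measurable.iInf fun c => hdc c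
  -- measurable selector attaining the pointwise infimum
  obtain ⟨T0, hT0m, hT0⟩ : ∃ T : EuclideanSpace ℝ (Fin n) → C, Measurable T ∧
      ∀ x, d (f (T x)) x = ⨅ c, d (f c) x := by
    let e := Fintype.equivFin C
    have hk : 0 < Fintype.card C := Fintype.card_pos
    let g : ℕ → C := fun m => e.symm ⟨m % Fintype.card C, Nat.mod_lt _ hk⟩
    let p : ℕ → EuclideanSpace ℝ (Fin n) → Prop := fun m x => d (f (g m)) x = ⨅ c, d (f c) x
    have h : ∀ x, ∃ m, p m x := by
      intro x
      obtain ⟨c, _, hc⟩ := Finset.exists_min_image Finset.univ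
        (fun c : C => d (f c) x) ⟨Classical.arbitrary C, Finset.mem_univ _⟩
      refine ⟨(e c : ℕ), ?_⟩
      have hgc : g (e c : ℕ) = c := by
        simp only [g]
        have : ((e c : ℕ) % Fintype.card C) = (e c : ℕ) :=
          Nat.mod_eq_of_lt (e c).2
        rw [show (⟨(e c : ℕ) % Fintype.card C, Nat.mod_lt _ hk⟩ : Fin (Fintype.card C))
            = e c from Fin.ext this]
        exact e.symm_apply_apply c
      show d (f (g (e c : ℕ))) x = ⨅ c', d (f c') x
      rw [hgc]
      exact le_antisymm (le_iInf fun c' => hc c' (Finset.mem_univ _)) (iInf_le _ c)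
    refine ⟨fun x => g (Nat.find (h x)), ?_, fun x => Nat.find_spec (h x)⟩
    exact Measurable.find (f := fun m _ => g m) (fun m => measurable_const)
      (fun m => by
        have hset : {x | p m x}
            = {x : EuclideanSpace ℝ (Fin n) | d (f (g m)) x ≤ ⨅ c, d (f c) x} := by
          ext x
          exact ⟨le_of_eq, fun h' => le_antisymm h' (iInf_le _ _)⟩
        rw [hset]
        exact measurableSet_le (hdc (g m)) hinf) h
  have h2 : (⨅ (T : EuclideanSpace ℝ (Fin n) → C) (_ : Measurable T), ∫⁻ x, d (f (T x)) x ∂P)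
      = ∫⁻ x, ⨅ c, d (f c) x ∂P := by
    refine le_antisymm ?_ ?_
    · exact iInf₂_le_of_le T0 hT0m (le_of_eq (lintegral_congr fun x => hT0 x))
    · exact le_iInf₂ fun T hT => lintegral_mono fun x => iInf_le _ (T x)
  refine ⟨?_, h2⟩
  rw [h2]
  refine le_antisymm ?_ ?_
  · -- deterministic kernel from T0
    have hmap : IsProbabilityMeasure (P.map T0) := Measure.isProbabilityMeasure_map hT0m.aemeasurable
    refine iInf_le_of_le (P.map T0) <| iInf_le_of_le hmap <|
      iInf_le_of_le (Kernel.deterministic T0 hT0m) <| iInf_le_of_le inferInstance <|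
      iInf_le_of_le ?_ ?_
    · simp only [Kernel.deterministic_apply]
      exact Measure.bind_dirac_eq_map P hT0m
    · refine le_of_eq (lintegral_congr fun x => ?_)
      rw [← hT0 x]
      rw [Finset.sum_eq_single (T0 x)]
      · simp [Kernel.deterministic_apply]
      · intro c _ hc
        simp [Kernel.deterministic_apply, Measure.dirac_apply' _ (measurableSet_singleton c),
          Set.indicator, Ne.symm hc]
      · intro habs; exact absurd (Finset.mem_univ _) habs
  · refine le_iInf fun γ => le_iInf fun hγ => le_iInf fun κ => le_iInf fun hκ =>
      le_iInf fun _ => lintegral_mono fun x => ?_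
    have hsum : ∑ c : C, κ x {c} = 1 := by
      have := sum_measure_preimage_singleton (μ := κ x) Finset.univ (f := id)
        (fun c _ => measurableSet_singleton c)
      simpa using this
    calc ⨅ c, d (f c) x = (∑ c : C, κ x {c}) * ⨅ c, d (f c) x := by rw [hsum, one_mul]
      _ = ∑ c : C, κ x {c} * ⨅ c', d (f c') x := Finset.sum_mul ..
      _ ≤ ∑ c : C, κ x {c} * d (f c) x :=
          Finset.sum_le_sum fun c _ => mul_le_mul_right (iInf_le _ c) _
end

section
/- Let C be a nonempty finite type, P a Borel probability measure on ℝ^n, and d : ℝ^n → ℝ^n → ℝ≥0∞ a Borel-measurable cost. Then the infimum, over all decoders f : C → ℝ^n and all probability measures γ on C, of W_d(f#γ, P), equals the infimum, over all decoders f : C → ℝ^n and all Borel-measurable deterministic discrete encoders T̄ : ℝ^n → C, of ∫ d(f (T̄ x), x) dP(x). -/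
open MeasureTheory ProbabilityTheory ENNReal

/-!
A deterministic encoder `T` yields the coupling `x ↦ (f (T x), x)` of `(T#P).map f`
and `P`, whose cost is the distortion of `T`; this gives `≤`. Conversely, any coupling of `f#γ`
and `P` transports `x` to some codeword `f c`, which costs at least `min_c d (f c, x)`; a
measurable choice of a minimising codeword is an encoder whose distortion is at most the cost
of the coupling.
-/

section ArgMin

variable {X C β : Type*} [MeasurableSpace X] [MeasurableSpace C] [DiscreteMeasurableSpace C]
  [Countable C] [MeasurableSpace β] {g : C → X → β}

theorem measurable_apply_selector (hg : ∀ c, Measurable (g c)) {T : X → C} (hT : Measurable T) :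
    Measurable fun x => g (T x) x :=
  (measurable_from_prod_countable_left (f := fun p : X × C => g p.2 p.1) hg).comp
    (measurable_id.prodMk hT)

variable [LinearOrder β] [TopologicalSpace β] [OrderClosedTopology β] [SecondCountableTopology β]
  [OpensMeasurableSpace β]

theorem Finset.Nonempty.exists_measurable_argmin (hg : ∀ c, Measurable (g c)) {s : Finset C}
    (hs : s.Nonempty) :
    ∃ T : X → C, Measurable T ∧ ∀ x, T x ∈ s ∧ ∀ c ∈ s, g (T x) x ≤ g c x := by
  induction hs using Finset.Nonempty.cons_induction with
  | singleton a => exact ⟨fun _ => a, measurable_const, by simp⟩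
  | cons a s _ _ ih =>
    obtain ⟨T, hT, hT_min⟩ := ih
    refine ⟨fun x => if g a x ≤ g (T x) x then a else T x,
      Measurable.ite (measurableSet_le (hg a) (measurable_apply_selector hg hT))
        measurable_const hT, fun x => ?_⟩
    dsimp only
    split_ifs with h
    · exact ⟨Finset.mem_cons_self a s, by simpa [h] using fun c hc => h.trans ((hT_min x).2 c hc)⟩
    · exact ⟨Finset.mem_cons_of_mem (hT_min x).1, by simpa [(not_le.mp h).le] using (hT_min x).2⟩

theorem exists_measurable_argmin [Finite C] [Nonempty C] (hg : ∀ c, Measurable (g c)) :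
    ∃ T : X → C, Measurable T ∧ ∀ x c, g (T x) x ≤ g c x := by
  have := Fintype.ofFinite C
  obtain ⟨T, hT, hTmin⟩ := Finset.univ_nonempty.exists_measurable_argmin hg
  exact ⟨T, hT, fun x c => (hTmin x).2 c (Finset.mem_univ c)⟩

end ArgMin

section Wcost

variable {X Y : Type*} [MeasurableSpace X] [MeasurableSpace Y] {c : X → Y → ℝ≥0∞}

theorem Wcost_map_le_lintegral (hc : Measurable (Function.uncurry c)) (ν : Measure Y)
    [IsProbabilityMeasure ν] {φ : Y → X} (hφ : Measurable φ) :
    Wcost c (ν.map φ) ν ≤ ∫⁻ y, c (φ y) y ∂ν := by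
  have hgraph : Measurable fun y => (φ y, y) := hφ.prodMk measurable_id
  have := Measure.isProbabilityMeasure_map (μ := ν) hgraph.aemeasurable
  refine iInf₂_le_of_le (ν.map fun y => (φ y, y)) this (iInf₂_le_of_le
    (Measure.fst_map_prodMk measurable_id) ?_ ?_)
  · rw [Measure.snd_map_prodMk hφ]; exact Measure.map_id
  · rw [lintegral_map (f := fun p => c p.1 p.2) hc hgraph]

theorem lintegral_le_Wcost {μ : Measure X} {ν : Measure Y} {h : Y → ℝ≥0∞}
    (hh : ∀ᵐ x ∂μ, ∀ y, h y ≤ c x y) : ∫⁻ y, h y ∂ν ≤ Wcost c μ ν := by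
  refine le_iInf₂ fun π _ => le_iInf₂ fun hfst hsnd => ?_
  have hπ : ∀ᵐ p ∂π, h p.2 ≤ c p.1 p.2 := by
    rw [← hfst] at hh
    filter_upwards [ae_of_ae_map measurable_fst.aemeasurable hh] with p hp using hp p.2
  calc ∫⁻ y, h y ∂ν = ∫⁻ y, h y ∂π.map Prod.snd := by rw [← hsnd, Measure.snd]
    _ ≤ ∫⁻ p, h p.2 ∂π := lintegral_map_le h Prod.snd
    _ ≤ ∫⁻ p, c p.1 p.2 ∂π := lintegral_mono_ae hπ

end Wcost

/-- **Theorem 1 of the paper (reconstruction-distortion form)**: for a nonempty finite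
type `C`, a Borel probability measure `P` on `ℝ^n`, and a Borel-measurable cost `d`,
the infimum over decoders `f : C → ℝ^n` and probability measures `γ` on `C` of
`W_d(f#γ, P)` equals the infimum over decoders `f` and Borel-measurable deterministic
discrete encoders `T̄ : ℝ^n → C` of `∫ d(f (T̄ x), x) dP(x)`. -/
theorem stmt4 {n : ℕ} {C : Type*} [Fintype C] [Nonempty C]
    [MeasurableSpace C] [DiscreteMeasurableSpace C]
    (P : Measure (EuclideanSpace ℝ (Fin n))) [IsProbabilityMeasure P]
    (d : EuclideanSpace ℝ (Fin n) → EuclideanSpace ℝ (Fin n) → ℝ≥0∞)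
    (hd : Measurable (Function.uncurry d)) :
    (⨅ (f : C → EuclideanSpace ℝ (Fin n)) (γ : Measure C)
       (_ : IsProbabilityMeasure γ), Wcost d (γ.map f) P)
      = ⨅ (f : C → EuclideanSpace ℝ (Fin n))
          (T : EuclideanSpace ℝ (Fin n) → C) (_ : Measurable T),
          ∫⁻ x, d (f (T x)) x ∂P := by
  apply le_antisymm
  · refine le_iInf fun f => le_iInf₂ fun T hT => ?_
    have hf : Measurable f := Measurable.of_discrete
    refine iInf_le_of_le f (iInf₂_le_of_le (P.map T) (Measure.isProbabilityMeasure_map hT.aemeasurable) ?_)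
    rw [Measure.map_map hf hT]
    exact Wcost_map_le_lintegral hd P (hf.comp hT)
  · refine le_iInf fun f => le_iInf₂ fun γ _ => ?_
    obtain ⟨T, hT, hTmin⟩ := exists_measurable_argmin (X := EuclideanSpace ℝ (Fin n))
      (fun c => hd.comp (measurable_const.prodMk measurable_id) : ∀ c, Measurable (d (f c)))
    refine iInf_le_of_le f (iInf₂_le_of_le T hT (lintegral_le_Wcost ?_))
    filter_upwards [ae_map_mem_range f (Set.finite_range f).measurableSet γ]
    rintro _ ⟨c, rfl⟩ x
    exact hTmin x c
end

section
/- Fix positive integers K, Q, D, n, a Borel probability measure P on ℝ^n, a Borel-measurable cost d_x : ℝ^n → ℝ^n → ℝ≥0∞, and λ > 0. For a codebook e : Fin K → ℝ^D let VQ_e : ℝ^D → Fin K send z to the least index k minimizing ‖z − e k‖, acting coordinatewise on (ℝ^D)^Q, and let f_dz(z, z') = (1/Q) ∑_{q} ‖z^q − z'^q‖ on (ℝ^D)^Q. Then the infimum, over codebooks e : Fin K → ℝ^D, decoders f : (Fin K)^Q → ℝ^n, and Borel-measurable discrete encoders T̄ : ℝ^n → (Fin K)^Q, of ∫ d_x(f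 (T̄ x), x) dP(x), equals the infimum, over codebooks e, decoders f, Borel-measurable continuous encoders T : ℝ^n → (ℝ^D)^Q, and Borel probability measures γ on (ℝ^D)^Q supported on the finite set of codeword tuples {e k : k ∈ Fin K}^Q, of ∫ d_x(f (VQ_e (T x)), x) dP(x) + λ · W_{f_dz}(T#P, γ). -/
open MeasureTheory ProbabilityTheory ENNReal

/-- The nearest-codeword quantizer index `VQ_e`: the least index `k` minimizing
`‖z − e k‖`. -/
noncomputable def nearestIdx {K D : ℕ} [NeZero K]
    (e : Fin K → EuclideanSpace ℝ (Fin D)) (z : EuclideanSpace ℝ (Fin D)) : Fin K :=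
  (Finset.univ.filter (fun k => ∀ j, ‖z - e k‖ ≤ ‖z - e j‖)).min' (by
    obtain ⟨k, -, hk⟩ := Finset.exists_min_image Finset.univ (fun k => ‖z - e k‖)
      ⟨0, Finset.mem_univ _⟩
    exact ⟨k, Finset.mem_filter.mpr ⟨Finset.mem_univ _, fun j => hk j (Finset.mem_univ _)⟩⟩)

/-- The latent cost `f_dz(z, z') = (1/Q) ∑ q, ‖z q − z' q‖` on `(ℝ^D)^Q`,
valued in `ℝ≥0∞`. -/
noncomputable def fdz {Q D : ℕ} (z z' : Fin Q → EuclideanSpace ℝ (Fin D)) : ℝ≥0∞ :=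
  (∑ q, ENNReal.ofReal ‖z q - z' q‖) / (Q : ℝ≥0∞)

/-! Quantizing a continuous encoder yields a measurable discrete encoder with the same
distortion, and the regularizer is nonnegative, so the discrete optimum is the smaller one.
Conversely, a discrete encoder `T̄` is recovered by `VQ_e` from the continuous encoder
`x ↦ e (T̄ x)` whenever the codebook `e` is injective (possible since `D > 0`), and taking `γ`
to be the pushforward of `P` under that encoder makes the Wasserstein term vanish. -/

section Quantizer

variable {K D : ℕ} [NeZero K] (e : Fin K → EuclideanSpace ℝ (Fin D))

lemma nearestIdx_eq_iff (z : EuclideanSpace ℝ (Fin D)) (k : Fin K) :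
    nearestIdx e z = k ↔ (∀ j, ‖z - e k‖ ≤ ‖z - e j‖) ∧
      ∀ j, (∀ i, ‖z - e j‖ ≤ ‖z - e i‖) → k ≤ j := by
  simp [nearestIdx, Finset.min'_eq_iff]

@[fun_prop]
lemma measurable_nearestIdx : Measurable (nearestIdx e) := by
  have hnearest : ∀ j, Measurable fun z : EuclideanSpace ℝ (Fin D) =>
      ∀ i, ‖z - e j‖ ≤ ‖z - e i‖ := fun j =>
    Measurable.forall fun i =>
      measurableSet_setOfPred.1 (measurableSet_le (by fun_prop) (by fun_prop))
  refine measurable_to_countable' fun k => ?_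
  simp only [Set.preimage, Set.mem_singleton_iff, nearestIdx_eq_iff]
  exact measurableSet_setOfPred.2
    ((hnearest k).and (Measurable.forall fun j => (hnearest j).imp measurable_const))

variable {e}

lemma nearestIdx_apply_self (he : Function.Injective e) (k : Fin K) :
    nearestIdx e (e k) = k := by
  refine (nearestIdx_eq_iff e _ k).2 ⟨fun j => by simp, fun j hj => le_of_eq (he ?_)⟩
  simpa [sub_eq_zero, eq_comm] using hj k

end Quantizer

lemma Wcost_self_eq_zero {X : Type*} [MeasurableSpace X] {c : X → X → ℝ≥0∞}
    (hc : ∀ x, c x x = 0) (μ : Measure X) [IsProbabilityMeasure μ] : Wcost c μ μ = 0 := by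
  have hdiag : Measurable fun x : X => (x, x) := measurable_id.prodMk measurable_id
  have hπ : IsProbabilityMeasure (μ.map fun x => (x, x)) :=
    Measure.isProbabilityMeasure_map hdiag.aemeasurable
  have hfst : (μ.map fun x => (x, x)).fst = μ := by
    rw [Measure.fst, Measure.map_map measurable_fst hdiag]; exact Measure.map_id
  have hsnd : (μ.map fun x => (x, x)).snd = μ := by
    rw [Measure.snd, Measure.map_map measurable_snd hdiag]; exact Measure.map_id
  refine nonpos_iff_eq_zero.1 (iInf_le_of_le _ (iInf_le_of_le hπ (iInf_le_of_le hfst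
    (iInf_le_of_le hsnd ?_))))
  simpa [hc] using lintegral_map_le (fun p : X × X => c p.1 p.2) (fun x => (x, x)) (μ := μ)

lemma fdz_self {Q D : ℕ} (z : Fin Q → EuclideanSpace ℝ (Fin D)) : fdz z z = 0 := by
  simp [fdz]

theorem stmt5_general {K Q D n : ℕ} [NeZero K] (hD : 0 < D)
    (P : Measure (EuclideanSpace ℝ (Fin n))) [IsProbabilityMeasure P]
    (dx : EuclideanSpace ℝ (Fin n) → EuclideanSpace ℝ (Fin n) → ℝ≥0∞)
    (lam : ℝ) :
    (⨅ (e : Fin K → EuclideanSpace ℝ (Fin D))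
       (f : (Fin Q → Fin K) → EuclideanSpace ℝ (Fin n))
       (T : EuclideanSpace ℝ (Fin n) → (Fin Q → Fin K)) (_ : Measurable T),
       ∫⁻ x, dx (f (T x)) x ∂P)
    = ⨅ (e : Fin K → EuclideanSpace ℝ (Fin D))
        (f : (Fin Q → Fin K) → EuclideanSpace ℝ (Fin n))
        (T : EuclideanSpace ℝ (Fin n) → (Fin Q → EuclideanSpace ℝ (Fin D)))
        (_ : Measurable T)
        (γ : Measure (Fin Q → EuclideanSpace ℝ (Fin D)))
        (_ : IsProbabilityMeasure γ)
        (_ : γ {z | ∀ q, ∃ k, z q = e k} = 1),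
        (∫⁻ x, dx (f (fun q => nearestIdx e (T x q))) x ∂P)
          + ENNReal.ofReal lam * Wcost fdz (P.map T) γ := by
  apply le_antisymm
  · refine le_iInf fun e => le_iInf fun f => le_iInf fun T => le_iInf fun hT =>
      le_iInf fun γ => le_iInf fun _ => le_iInf fun _ => le_add_right ?_
    exact iInf_le_of_le e (iInf_le_of_le f (iInf_le_of_le _ (iInf_le_of_le (by fun_prop) le_rfl)))
  · refine le_iInf fun _ => le_iInf fun f => le_iInf fun T => le_iInf fun hT => ?_
    have : Nonempty (Fin D) := ⟨⟨0, hD⟩⟩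
    let e' : Fin K ↪ EuclideanSpace ℝ (Fin D) :=
      Fin.valEmbedding.trans (Infinite.natEmbedding _)
    let T' := fun x q => e' (T x q)
    have hT' : Measurable T' := by fun_prop
    have hγ : IsProbabilityMeasure (P.map T') := Measure.isProbabilityMeasure_map hT'.aemeasurable
    have hcodewords : P.map T' {z | ∀ q, ∃ k, z q = e' k} = 1 := by
      refine le_antisymm prob_le_one (le_of_eq_of_le ?_ (Measure.le_map_apply hT'.aemeasurable _))
      simp [T']
    refine iInf_le_of_le (⇑e') (iInf_le_of_le f (iInf_le_of_le T' (iInf_le_of_le hT'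
      (iInf_le_of_le _ (iInf_le_of_le hγ (iInf_le_of_le hcodewords (le_of_eq ?_)))))))
    simp [T', Wcost_self_eq_zero fdz_self, nearestIdx_apply_self e'.injective]

/-- **Theorem 2 of the paper (reconstruction-distortion form)**: the optimal expected
distortion over codebooks `e`, decoders `f` and Borel-measurable deterministic discrete
encoders `T̄ : ℝ^n → (Fin K)^Q` equals, for every `λ > 0`, the optimal value over
codebooks `e`, decoders `f`, Borel-measurable continuous encoders `T : ℝ^n → (ℝ^D)^Q`,
and probability measures `γ` on `(ℝ^D)^Q` supported on codeword tuples, of the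
distortion after vector quantization plus `λ` times the Wasserstein regularizer
`W_{f_dz}(T#P, γ)`. -/
theorem stmt5 {K Q D n : ℕ} [NeZero K] (hQ : 0 < Q) (hD : 0 < D) (hn : 0 < n)
    (P : Measure (EuclideanSpace ℝ (Fin n))) [IsProbabilityMeasure P]
    (dx : EuclideanSpace ℝ (Fin n) → EuclideanSpace ℝ (Fin n) → ℝ≥0∞)
    (hdx : Measurable (Function.uncurry dx))
    (lam : ℝ) (hlam : 0 < lam) :
    (⨅ (e : Fin K → EuclideanSpace ℝ (Fin D))
       (f : (Fin Q → Fin K) → EuclideanSpace ℝ (Fin n))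
       (T : EuclideanSpace ℝ (Fin n) → (Fin Q → Fin K)) (_ : Measurable T),
       ∫⁻ x, dx (f (T x)) x ∂P)
    = ⨅ (e : Fin K → EuclideanSpace ℝ (Fin D))
        (f : (Fin Q → Fin K) → EuclideanSpace ℝ (Fin n))
        (T : EuclideanSpace ℝ (Fin n) → (Fin Q → EuclideanSpace ℝ (Fin D)))
        (_ : Measurable T)
        (γ : Measure (Fin Q → EuclideanSpace ℝ (Fin D)))
        (_ : IsProbabilityMeasure γ)
        (_ : γ {z | ∀ q, ∃ k, z q = e k} = 1),
        (∫⁻ x, dx (f (fun q => nearestIdx e (T x q))) x ∂P)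
          + ENNReal.ofReal lam * Wcost fdz (P.map T) γ :=
  stmt5_general hD P dx lam
end

section
/- Let P be a Borel probability measure on ℝ^n, T : ℝ^n → (ℝ^D)^Q Borel measurable with coordinates T^q, e : Fin K → ℝ^D a codebook, and π^1, …, π^Q probability vectors on Fin K with P_{e,π^q} = ∑_k π^q_k δ_{e k}. Suppose that for each q there exists a coupling μ^q of T^q#P and P_{e,π^q} attaining W_{dist}(T^q#P, P_{e,π^q}), where dist is the Euclidean distance on ℝ^D. Then there exist a Borel probability measure γ* on (ℝ^D)^Q, supported on codeword tuples {e k : k ∈ Fin K}^Q and with q-th coordinate marginal P_{e,π^q} for every q, and a coupling μ of T#P and γ* such that ∫ f_dz dμ = (1/Q) ∑_{q=1}^{Q} W_{dist}(T^q#P, P_{e,π^q}), where f_dz(z, z') = (1/Q) ∑_q ‖z^q − z'^q‖; consequently W_{f_dz}(T#P, γ*) ≤ (1/Q) ∑_q W_{dist}(T^q#P, P_{e,π^q}). -/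
open MeasureTheory ProbabilityTheory ENNReal

/-- The discrete codebook measure `P_{e,π} = ∑ k, π k • δ_{e k}` on `ℝ^D`. -/
noncomputable def codebookMeasure {K D : ℕ} (e : Fin K → EuclideanSpace ℝ (Fin D))
    (w : Fin K → ℝ) : Measure (EuclideanSpace ℝ (Fin D)) :=
  ∑ k, (ENNReal.ofReal (w k)) • Measure.dirac (e k)

/-!
Disintegrate each optimal coupling as `μ^q = (T^q#P) ⊗ κ_q`. Given `z ∼ T#P`, draw the
coordinates `z'^q` conditionally independently from `κ_q(z^q)`: the resulting coupling `μ` of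
`T#P` and `γ* := law(z')` has `(z^q, z'^q)`-marginal `μ^q` for every `q`. Since `f_dz` is an
average of coordinate costs, `∫ f_dz dμ` is the average of the optimal costs, and `γ*` inherits
the codebook marginals, so it lives on codeword tuples.
-/

open Function

namespace ProbabilityTheory.Kernel

variable {ι : Type*} [Fintype ι] {X Y : ι → Type*} [∀ i, MeasurableSpace (X i)]
  [∀ i, MeasurableSpace (Y i)]

noncomputable def pi (κ : ∀ i, Kernel (X i) (Y i)) [∀ i, IsMarkovKernel (κ i)] :
    Kernel (∀ i, X i) (∀ i, Y i) where
  toFun x := Measure.pi fun i => κ i (x i)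
  measurable' := by
    refine .measure_of_isPiSystem_of_isProbabilityMeasure generateFrom_pi.symm isPiSystem_pi ?_
    rintro _ ⟨t, ht, rfl⟩
    simp_rw [Measure.pi_pi]
    exact Finset.measurable_prod _ fun i _ =>
      (Kernel.measurable_coe (κ i) (ht i trivial)).comp (measurable_pi_apply i)

variable (κ : ∀ i, Kernel (X i) (Y i)) [∀ i, IsMarkovKernel (κ i)]

lemma pi_apply (x : ∀ i, X i) : pi κ x = Measure.pi fun i => κ i (x i) := rfl

instance : IsMarkovKernel (pi κ) :=
  ⟨fun x => by rw [pi_apply]; infer_instance⟩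

lemma map_eval_compProd_pi (μ : Measure (∀ i, X i)) [IsProbabilityMeasure μ] (i : ι) :
    (μ ⊗ₘ pi κ).map (fun p => (p.1 i, p.2 i)) = μ.map (eval i) ⊗ₘ κ i := by
  have hmeas : Measurable fun p : (∀ i, X i) × (∀ i, Y i) => (p.1 i, p.2 i) := by fun_prop
  refine ext_of_generate_finite _ generateFrom_prod.symm isPiSystem_prod ?_ ?_
  · rintro _ ⟨A, hA, B, hB, rfl⟩
    rw [Measure.map_apply hmeas (hA.prod hB)]
    change (μ ⊗ₘ pi κ) ((eval i ⁻¹' A) ×ˢ (eval i ⁻¹' B)) = _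
    rw [Measure.compProd_apply_prod (measurable_pi_apply i hA) (measurable_pi_apply i hB),
      Measure.compProd_apply_prod hA hB,
      setLIntegral_map hA (Kernel.measurable_coe (κ i) hB) (measurable_pi_apply i)]
    refine setLIntegral_congr_fun (measurable_pi_apply i hA) fun x _ => ?_
    rw [pi_apply, ← Measure.map_apply (measurable_pi_apply i) hB,
      (measurePreserving_eval _ i).map_eq]
  · rw [Measure.map_apply hmeas .univ]
    simp [Measure.map_apply (measurable_pi_apply i) .univ]

end ProbabilityTheory.Kernel

theorem exists_pi_coupling_of_couplings {ι : Type*} [Fintype ι] {X Y : ι → Type*}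
    [∀ i, MeasurableSpace (X i)] [∀ i, MeasurableSpace (Y i)] [∀ i, StandardBorelSpace (Y i)]
    [∀ i, Nonempty (Y i)]
    (ν : Measure (∀ i, X i)) [IsProbabilityMeasure ν]
    (π : ∀ i, Measure (X i × Y i)) [∀ i, IsFiniteMeasure (π i)]
    (hπ : ∀ i, (π i).fst = ν.map (eval i)) :
    ∃ μ : Measure ((∀ i, X i) × (∀ i, Y i)), IsProbabilityMeasure μ ∧ μ.fst = ν ∧
      ∀ i, μ.map (fun p => (p.1 i, p.2 i)) = π i :=
  ⟨ν ⊗ₘ Kernel.pi fun i => (π i).condKernel, inferInstance, Measure.fst_compProd _ _,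
    fun i => by rw [Kernel.map_eval_compProd_pi, ← hπ, Measure.disintegrate]⟩

lemma measure_forall_mem_eq_one {ι : Type*} [Countable ι] {Y : ι → Type*}
    [∀ i, MeasurableSpace (Y i)] {γ : Measure (∀ i, Y i)} [IsProbabilityMeasure γ]
    {S : ∀ i, Set (Y i)} (h : ∀ i, ∀ᵐ y ∂γ.map (eval i), y ∈ S i) :
    γ {z | ∀ i, z i ∈ S i} = 1 := by
  have hae : ∀ᵐ z ∂γ, ∀ i, z i ∈ S i :=
    ae_all_iff.2 fun i => ae_of_ae_map (measurable_pi_apply i).aemeasurable (h i)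
  rw [← measure_univ (μ := γ)]
  exact measure_congr (ae_eq_univ.2 hae)

lemma Wcost_le_lintegral {X Y : Type*} [MeasurableSpace X] [MeasurableSpace Y]
    (c : X → Y → ℝ≥0∞) (π : Measure (X × Y)) [IsProbabilityMeasure π] :
    Wcost c π.fst π.snd ≤ ∫⁻ p, c p.1 p.2 ∂π :=
  iInf_le_of_le π <| iInf_le_of_le ‹_› <| iInf_le_of_le rfl <| iInf_le _ rfl

lemma ae_codebookMeasure {K D : ℕ} (e : Fin K → EuclideanSpace ℝ (Fin D)) (w : Fin K → ℝ) :
    ∀ᵐ y ∂codebookMeasure e w, ∃ k, y = e k := by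
  rw [ae_iff, codebookMeasure, Measure.coe_finsetSum, Finset.sum_apply]
  refine Finset.sum_eq_zero fun k _ => ?_
  rw [Measure.smul_apply, Measure.dirac_apply, Set.indicator_of_notMem (by simp), smul_zero]

lemma lintegral_fdz {Q D : ℕ}
    (μ : Measure ((Fin Q → EuclideanSpace ℝ (Fin D)) × (Fin Q → EuclideanSpace ℝ (Fin D)))) :
    ∫⁻ p, fdz p.1 p.2 ∂μ
      = (∑ q, ∫⁻ r, edist r.1 r.2 ∂μ.map (fun p => (p.1 q, p.2 q))) / Q := by
  have hofReal : ∀ a b : EuclideanSpace ℝ (Fin D), ENNReal.ofReal ‖a - b‖ = edist a b := by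
    intro a b; rw [edist_dist, dist_eq_norm]
  simp_rw [fdz, hofReal, div_eq_mul_inv]
  rw [lintegral_mul_const _ (by fun_prop), lintegral_finsetSum _ fun q _ => by fun_prop]
  congr 1
  refine Finset.sum_congr rfl fun q _ => ?_
  rw [lintegral_map measurable_edist (by fun_prop)]

theorem stmt7_general {K Q D n : ℕ}
    (P : Measure (EuclideanSpace ℝ (Fin n))) [IsProbabilityMeasure P]
    (T : EuclideanSpace ℝ (Fin n) → (Fin Q → EuclideanSpace ℝ (Fin D)))
    (hT : Measurable T)
    (e : Fin K → EuclideanSpace ℝ (Fin D)) (w : Fin Q → Fin K → ℝ)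
    (hopt : ∀ q, ∃ μq : Measure (EuclideanSpace ℝ (Fin D) × EuclideanSpace ℝ (Fin D)),
      IsProbabilityMeasure μq ∧ μq.fst = P.map (fun x => T x q) ∧
      μq.snd = codebookMeasure e (w q) ∧
      (∫⁻ p, edist p.1 p.2 ∂μq)
        = Wcost (fun a b => edist a b) (P.map (fun x => T x q)) (codebookMeasure e (w q))) :
    ∃ (γstar : Measure (Fin Q → EuclideanSpace ℝ (Fin D)))
      (μ : Measure ((Fin Q → EuclideanSpace ℝ (Fin D)) × (Fin Q → EuclideanSpace ℝ (Fin D)))),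
      IsProbabilityMeasure γstar ∧
      γstar {z | ∀ q, ∃ k, z q = e k} = 1 ∧
      (∀ q, γstar.map (fun z => z q) = codebookMeasure e (w q)) ∧
      IsProbabilityMeasure μ ∧ μ.fst = P.map T ∧ μ.snd = γstar ∧
      (∫⁻ p, fdz p.1 p.2 ∂μ)
        = (∑ q, Wcost (fun a b => edist a b)
            (P.map (fun x => T x q)) (codebookMeasure e (w q))) / (Q : ℝ≥0∞) ∧
      Wcost fdz (P.map T) γstar
        ≤ (∑ q, Wcost (fun a b => edist a b)
            (P.map (fun x => T x q)) (codebookMeasure e (w q))) / (Q : ℝ≥0∞) := by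
  choose μq hprob hfst hsnd hopt using hopt
  have := Measure.isProbabilityMeasure_map (μ := P) hT.aemeasurable
  obtain ⟨μ, hμ, hμfst, hμq⟩ := exists_pi_coupling_of_couplings (P.map T) μq fun q => by
    rw [hfst, Measure.map_map (measurable_pi_apply q) hT]; rfl
  have hmarg : ∀ q, μ.snd.map (fun z => z q) = codebookMeasure e (w q) := fun q => by
    rw [← hsnd, ← hμq, Measure.snd_map_prodMk (by fun_prop), Measure.snd,
      Measure.map_map (measurable_pi_apply q) measurable_snd]; rfl
  have hcost : ∫⁻ p, fdz p.1 p.2 ∂μ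
      = (∑ q, Wcost (fun a b => edist a b)
          (P.map (fun x => T x q)) (codebookMeasure e (w q))) / (Q : ℝ≥0∞) := by
    simp_rw [lintegral_fdz, hμq, hopt]
  refine ⟨μ.snd, μ, inferInstance, ?_, hmarg, hμ, hμfst, rfl, hcost, ?_⟩
  · exact measure_forall_mem_eq_one fun q => hmarg q ▸ ae_codebookMeasure e (w q)
  · exact hμfst ▸ hcost ▸ Wcost_le_lintegral _ μ

/-- **Eq. (65), the constructive step in the proof of Lemma 2**: if for each `q` there
is a coupling `μ^q` of `T^q#P` and `P_{e,π^q}` attaining `W_dist(T^q#P, P_{e,π^q})`, then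
there exist a probability measure `γ*` on `(ℝ^D)^Q` supported on codeword tuples with
`q`-th coordinate marginal `P_{e,π^q}` for every `q`, and a coupling `μ` of `T#P` and
`γ*`, such that `∫ f_dz dμ = (1/Q) ∑ q, W_dist(T^q#P, P_{e,π^q})`; consequently
`W_{f_dz}(T#P, γ*) ≤ (1/Q) ∑ q, W_dist(T^q#P, P_{e,π^q})`. -/
theorem stmt7 {K Q D n : ℕ}
    (P : Measure (EuclideanSpace ℝ (Fin n))) [IsProbabilityMeasure P]
    (T : EuclideanSpace ℝ (Fin n) → (Fin Q → EuclideanSpace ℝ (Fin D)))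
    (hT : Measurable T)
    (e : Fin K → EuclideanSpace ℝ (Fin D)) (w : Fin Q → Fin K → ℝ)
    (hw0 : ∀ q k, 0 ≤ w q k) (hw1 : ∀ q, ∑ k, w q k = 1)
    (hopt : ∀ q, ∃ μq : Measure (EuclideanSpace ℝ (Fin D) × EuclideanSpace ℝ (Fin D)),
      IsProbabilityMeasure μq ∧ μq.fst = P.map (fun x => T x q) ∧
      μq.snd = codebookMeasure e (w q) ∧
      (∫⁻ p, edist p.1 p.2 ∂μq)
        = Wcost (fun a b => edist a b) (P.map (fun x => T x q)) (codebookMeasure e (w q))) :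
    ∃ (γstar : Measure (Fin Q → EuclideanSpace ℝ (Fin D)))
      (μ : Measure ((Fin Q → EuclideanSpace ℝ (Fin D)) × (Fin Q → EuclideanSpace ℝ (Fin D)))),
      IsProbabilityMeasure γstar ∧
      γstar {z | ∀ q, ∃ k, z q = e k} = 1 ∧
      (∀ q, γstar.map (fun z => z q) = codebookMeasure e (w q)) ∧
      IsProbabilityMeasure μ ∧ μ.fst = P.map T ∧ μ.snd = γstar ∧
      (∫⁻ p, fdz p.1 p.2 ∂μ)
        = (∑ q, Wcost (fun a b => edist a b)
            (P.map (fun x => T x q)) (codebookMeasure e (w q))) / (Q : ℝ≥0∞) ∧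
      Wcost fdz (P.map T) γstar
        ≤ (∑ q, Wcost (fun a b => edist a b)
            (P.map (fun x => T x q)) (codebookMeasure e (w q))) / (Q : ℝ≥0∞) :=
  stmt7_general P T hT e w hopt
end
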